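/- Let Ξ := Σ_{i=1}^n ‖N_i‖ and consider a control u with ‖u‖_{L²((0,∞),(ℝⁿ,‖·‖_∞))} < √(2ν)/(MΞ). Then the Volterra series ζ(t) := Σ_{m=0}^∞ ζ_m(t), defined recursively by ζ₀(t) := T(t)φ₀, ζ₁(t) := ∫₀ᵗ T(t−s)(Σ_{i=1}^n u_i(s) N_i ζ₀(s) + Bu(s)) ds, and ζ_k(t) := ∫₀ᵗ T(t−s) Σ_{i=1}^n u_i(s) N_i ζ_{k−1}(s) ds for k ≥ 2, converges uniformly on (0,∞), and ζ equals the mild solution of the bilinear evolution equation, i.e. ζ(t) = T(t)φ₀ + ∫₀ᵗ T(t−s)(Σ_{i=1}^n u_i(s) N_i ζ(s) + Bu(s)) ds. -/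

import Mathlib

open MeasureTheory ContinuousLinearMap Filter
open scoped ENNReal NNReal Topology RealInnerProductSpace

noncomputable section

/-- The open positive orthant `(0,∞)^m`. -/
def posOrthant (m : ℕ) : Set (Fin m → ℝ) := {t | ∀ i, 0 < t i}

/-- Lebesgue measure restricted to the positive orthant. -/
def orthantMeasure (m : ℕ) : Measure (Fin m → ℝ) := volume.restrict (posOrthant m)

/-- Hilbert-space model of the tensor product `H ⊗ (ℝⁿ)^{⊗ k}`:
functions from multi-indices to `H`, with the `ℓ²` norm. -/
abbrev Tens (H : Type*) [NormedAddCommGroup H] [InnerProductSpace ℝ H] (n k : ℕ) :=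
  PiLp 2 (fun _ : Fin k → Fin n => H)

instance Tens.instCompleteSpace {H : Type*} [NormedAddCommGroup H] [InnerProductSpace ℝ H]
    [CompleteSpace H] (n k : ℕ) : CompleteSpace (Tens H n k) :=
  inferInstance

section norms

variable {X Y : Type*} [NormedAddCommGroup X] [InnerProductSpace ℝ X]
  [NormedAddCommGroup Y] [InnerProductSpace ℝ Y]

/-- Trace (nuclear) norm of an operator between real inner-product spaces: the supremum
over finite orthonormal systems `(e_i)`, `(f_i)` of `∑ i |⟨f_i, T e_i⟩|`. -/
def traceNorm (T : X →L[ℝ] Y) : ℝ≥0∞ :=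
  ⨆ (m : ℕ) (e : {e : Fin m → X // Orthonormal ℝ e}) (f : {f : Fin m → Y // Orthonormal ℝ f}),
    ∑ i, (‖(inner ℝ (f.1 i) (T (e.1 i)) : ℝ)‖₊ : ℝ≥0∞)

/-- Square of the Hilbert–Schmidt norm, as a supremum over finite orthonormal systems. -/
def hsNormSq (T : X →L[ℝ] Y) : ℝ≥0∞ :=
  ⨆ (m : ℕ) (e : {e : Fin m → X // Orthonormal ℝ e}), ∑ i, (‖T (e.1 i)‖₊ : ℝ≥0∞) ^ 2

/-- Hilbert–Schmidt norm. -/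
def hsNorm (T : X →L[ℝ] Y) : ℝ≥0∞ := hsNormSq T ^ (1 / 2 : ℝ)

/-- A bounded operator is trace class if its trace norm is finite. -/
def IsTraceClass (T : X →L[ℝ] Y) : Prop := traceNorm T < ⊤

/-- A bounded operator is Hilbert–Schmidt if its Hilbert–Schmidt norm is finite. -/
def IsHilbertSchmidt (T : X →L[ℝ] Y) : Prop := hsNormSq T < ⊤

/-- The `i`-th singular value of an operator between Hilbert spaces, defined as its `i`-th
approximation number (the distance, in operator norm, to operators of rank at most `i`). -/
def singularValue (i : ℕ) (T : X →L[ℝ] Y) : ℝ :=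
  ⨅ S : {S : X →L[ℝ] Y // Module.rank ℝ (LinearMap.range (S : X →ₗ[ℝ] Y)) ≤ i}, ‖T - S.1‖

end norms

section system

variable {X H : Type*} [NormedAddCommGroup X] [InnerProductSpace ℝ X] [CompleteSpace X]
  [NormedAddCommGroup H] [InnerProductSpace ℝ H] [CompleteSpace H] {n : ℕ}

/-- An exponentially stable `C₀`-semigroup satisfying `‖T(t)‖ ≤ M e^{-ν t}`. -/
def IsC0SemigroupWith (T : ℝ → X →L[ℝ] X) (M ν : ℝ) : Prop :=
  1 ≤ M ∧ 0 < ν ∧ T 0 = 1 ∧ (∀ s t : ℝ, 0 ≤ s → 0 ≤ t → T (s + t) = T s * T t) ∧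
    (∀ x : X, ContinuousOn (fun t => T t x) (Set.Ici (0 : ℝ))) ∧
    (∀ t : ℝ, 0 ≤ t → ‖T t‖ ≤ M * Real.exp (-ν * t))

/-- `Γ² = ∑ᵢ ‖Nᵢ Nᵢ^*‖`. -/
def gammaSq (N : Fin n → X →L[ℝ] X) : ℝ := ∑ i, ‖N i * adjoint (N i)‖

/-- The stability condition `M² Γ² (2ν)⁻¹ < 1`. -/
def StabilityCond (N : Fin n → X →L[ℝ] X) (M ν : ℝ) : Prop :=
  M ^ 2 * gammaSq N / (2 * ν) < 1

/-- The operator chain `T(t₀) N_{α 0} T(t₁) ⋯ N_{α (k-1)} T(t_k)`. -/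
def Ochain (T : ℝ → X →L[ℝ] X) (N : Fin n → X →L[ℝ] X) {k : ℕ}
    (t : Fin (k + 1) → ℝ) (α : Fin k → Fin n) : X →L[ℝ] X :=
  T (t 0) * (List.ofFn fun l : Fin k => N (α l) * T (t l.succ)).prod

/-- The adjoint operator chain `T(t₀)^* N_{α 0}^* T(t₁)^* ⋯ N_{α (k-1)}^* T(t_k)^*`. -/
def Pchain (T : ℝ → X →L[ℝ] X) (N : Fin n → X →L[ℝ] X) {k : ℕ}
    (t : Fin (k + 1) → ℝ) (α : Fin k → Fin n) : X →L[ℝ] X :=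
  (List.ofFn fun l : Fin k => adjoint (T (t l.castSucc)) * adjoint (N (α l))).prod *
    adjoint (T (t (Fin.last k)))

/-- The kernel `O_k(t)` of the observability map: the component at the multi-index
`α = (n₁,…,n_k)` is `C T(t₀) N_{n₁} T(t₁) ⋯ N_{n_k} T(t_k)`. -/
def Ok (T : ℝ → X →L[ℝ] X) (N : Fin n → X →L[ℝ] X) (C : X →L[ℝ] H) (k : ℕ)
    (t : Fin (k + 1) → ℝ) : X →L[ℝ] Tens H n k :=
  (PiLp.continuousLinearEquiv 2 ℝ _).symm.toContinuousLinearMap.comp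
    (ContinuousLinearMap.pi fun α : Fin k → Fin n => C.comp (Ochain T N t α))

/-- The kernel `P_k(t)` of the reachability map: the component at the multi-index
`α = (n₁,…,n_k)` is `T(t₀)^* N_{n₁}^* T(t₁)^* ⋯ N_{n_k}^* T(t_k)^*`. -/
def Pk (T : ℝ → X →L[ℝ] X) (N : Fin n → X →L[ℝ] X) (k : ℕ)
    (t : Fin (k + 1) → ℝ) : X →L[ℝ] Tens X n k :=
  (PiLp.continuousLinearEquiv 2 ℝ _).symm.toContinuousLinearMap.comp
    (ContinuousLinearMap.pi fun α : Fin k → Fin n => Pchain T N t α)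

/-- `B ⊗ id_{(ℝⁿ)^{⊗k}}` in the tensor model. -/
def tensMap {E F : Type*} [NormedAddCommGroup E] [InnerProductSpace ℝ E]
    [NormedAddCommGroup F] [InnerProductSpace ℝ F] (B : E →L[ℝ] F) (n k : ℕ) :
    Tens E n k →L[ℝ] Tens F n k :=
  (PiLp.continuousLinearEquiv 2 ℝ _).symm.toContinuousLinearMap.comp
    ((ContinuousLinearMap.pi fun α : Fin k → Fin n =>
      B.comp (ContinuousLinearMap.proj α)).comp
        (PiLp.continuousLinearEquiv 2 ℝ _).toContinuousLinearMap)

/-- The control operator `B : ℝⁿ → X`, `Bu = ∑ᵢ uᵢ ψᵢ`. -/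
def Bop (ψ : Fin n → X) : EuclideanSpace ℝ (Fin n) →L[ℝ] X :=
  LinearMap.toContinuousLinearMap
    { toFun := fun u => ∑ i, u i • ψ i
      map_add' := by
        intro u v
        simp [add_smul, Finset.sum_add_distrib]
      map_smul' := by
        intro c u
        simp [smul_smul, Finset.smul_sum] }

/-- The fibre `F^n_{k+1}(H) = L²((0,∞)^{k+1}, H ⊗ (ℝⁿ)^{⊗k})` of the Fock space. -/
abbrev FockFiber (H : Type*) [NormedAddCommGroup H] [InnerProductSpace ℝ H] (n k : ℕ) :=
  MeasureTheory.Lp (α := Fin (k + 1) → ℝ) (Tens H n k) 2 (orthantMeasure (k + 1))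

/-- The Fock space `F^n(H) = ⊕_{k ≥ 0} F^n_{k+1}(H)` (Hilbert direct sum). -/
abbrev Fock (H : Type*) [NormedAddCommGroup H] [InnerProductSpace ℝ H] (n : ℕ) :=
  lp (fun k : ℕ => FockFiber H n k) 2

/-- `(W_k)` is the family of observability blocks: `W_k x = O_k(·) x` a.e. on the orthant. -/
def IsObsBlocks (T : ℝ → X →L[ℝ] X) (N : Fin n → X →L[ℝ] X) (C : X →L[ℝ] H)
    (Wk : ∀ k : ℕ, X →L[ℝ] FockFiber H n k) : Prop :=
  ∀ (k : ℕ) (x : X), ∀ᵐ t ∂(orthantMeasure (k + 1)),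
    (Wk k x : (Fin (k + 1) → ℝ) → Tens H n k) t = Ok T N C k t x

/-- `W` is the observability map assembled from the blocks `W_k`. -/
def IsObsMap (Wk : ∀ k : ℕ, X →L[ℝ] FockFiber H n k) (W : X →L[ℝ] Fock H n) : Prop :=
  ∀ (x : X) (k : ℕ), (W x : ∀ k, FockFiber H n k) k = Wk k x

/-- `(R_k)` is the family of reachability blocks: `R_k f = ∫ P_k(t)^* (B ⊗ id) f(t) dt`. -/
def IsReachBlocks (T : ℝ → X →L[ℝ] X) (N : Fin n → X →L[ℝ] X) (ψ : Fin n → X)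
    (Rk : ∀ k : ℕ, FockFiber (EuclideanSpace ℝ (Fin n)) n k →L[ℝ] X) : Prop :=
  ∀ (k : ℕ) (f : FockFiber (EuclideanSpace ℝ (Fin n)) n k),
    Rk k f = ∫ t, adjoint (Pk T N k t) (tensMap (Bop ψ) n k (f t)) ∂(orthantMeasure (k + 1))

/-- `R` is the reachability map assembled from the blocks `R_k`. -/
def IsReachMap (Rk : ∀ k : ℕ, FockFiber (EuclideanSpace ℝ (Fin n)) n k →L[ℝ] X)
    (R : Fock (EuclideanSpace ℝ (Fin n)) n →L[ℝ] X) : Prop :=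
  ∀ f : Fock (EuclideanSpace ℝ (Fin n)) n,
    R f = ∑' k : ℕ, Rk k ((f : ∀ k, FockFiber (EuclideanSpace ℝ (Fin n)) n k) k)

end system

section volterra

variable {X : Type*} [NormedAddCommGroup X] [InnerProductSpace ℝ X] [CompleteSpace X] {n : ℕ}

/-- The terms `ζ_m` of the Volterra series: `ζ₀(t) = T(t)φ₀`,
`ζ₁(t) = ∫₀ᵗ T(t−s)(∑ᵢ uᵢ(s) Nᵢ ζ₀(s) + Bu(s)) ds`, and
`ζ_k(t) = ∫₀ᵗ T(t−s) ∑ᵢ uᵢ(s) Nᵢ ζ_{k−1}(s) ds` for `k ≥ 2`. -/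
noncomputable def volterraTerm (T : ℝ → X →L[ℝ] X) (N : Fin n → X →L[ℝ] X) (ψ : Fin n → X)
    (u : ℝ → Fin n → ℝ) (φ₀ : X) : ℕ → ℝ → X
  | 0 => fun t => T t φ₀
  | 1 => fun t => ∫ s in Set.Ioc (0 : ℝ) t,
      T (t - s) ((∑ i, u s i • N i (volterraTerm T N ψ u φ₀ 0 s)) + ∑ i, u s i • ψ i)
  | (k + 2) => fun t => ∫ s in Set.Ioc (0 : ℝ) t,
      T (t - s) (∑ i, u s i • N i (volterraTerm T N ψ u φ₀ (k + 1) s))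

end volterra


/-!
Each term `ζ_{m+1}` is the semigroup convolved with a source bounded by `‖u(s)‖` times
`Ξ ‖ζ_m(s)‖` (plus `Ψ = ∑ ‖ψᵢ‖` when `m = 0`). Cauchy–Schwarz against the kernel `e^{-ν(t-s)}`
gives `∫₀ᵗ e^{-ν(t-s)} ‖u(s)‖ ds ≤ q := ‖u‖_{L²}/√(2ν)`, so `sup_t ‖ζ_m(t)‖` is dominated by a
sequence of eventual ratio `M Ξ q < 1`, and the Weierstrass M-test gives uniform convergence.
The same domination lets the series be summed under the integral, and summing the recursion
yields the mild-solution identity. The interchange needs each `ζ_m` to be measurable; this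
comes from continuity of `t ↦ ∫₀ᵗ T(t-s) g(s) ds` for locally integrable `g`, by dominated
convergence.
-/

open Set Real

theorem exp_neg_mul_le_one {ν t : ℝ} (hν : 0 ≤ ν) (ht : 0 ≤ t) : exp (-ν * t) ≤ 1 :=
  exp_le_one_iff.2 (by nlinarith)

theorem norm_sum_smul_le {ι E : Type*} [Fintype ι] [SeminormedAddCommGroup E] [NormedSpace ℝ E]
    (a : ι → ℝ) (v : ι → E) : ‖∑ i, a i • v i‖ ≤ ‖a‖ * ∑ i, ‖v i‖ := by
  rw [Finset.mul_sum]
  refine (norm_sum_le _ _).trans (Finset.sum_le_sum fun i _ => ?_)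
  rw [norm_smul]
  gcongr
  exact norm_le_pi_norm a i

theorem mul_toReal_div_lt_one {x : ℝ≥0∞} {a c : ℝ} (ha : 0 < a) (hc : 0 ≤ c)
    (hx : x < ENNReal.ofReal (a / c)) : c * (x.toReal / a) < 1 := by
  rcases hc.eq_or_lt with rfl | hc
  · simp at hx
  have hlt := ENNReal.toReal_lt_of_lt_ofReal hx
  rw [lt_div_iff₀ hc] at hlt
  rw [mul_div_assoc', div_lt_one ha]
  linarith

theorem MeasureTheory.MemLp.integrableOn_Ioc {E : Type*} [NormedAddCommGroup E] {f : ℝ → E}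
    (hf : MemLp f 2 (volume.restrict (Ioi 0))) (b : ℝ) : IntegrableOn f (Ioc 0 b) :=
  (hf.mono_measure (Measure.restrict_mono Ioc_subset_Ioi_self le_rfl)).integrable one_le_two

theorem MeasureTheory.IntegrableOn.integrable_indicator_Iic {E : Type*} [NormedAddCommGroup E]
    {f : ℝ → E} {t : ℝ} (hf : IntegrableOn f (Ioc 0 t)) :
    Integrable ((Iic t).indicator f) (volume.restrict (Ioi 0)) := by
  rwa [integrable_indicator_iff measurableSet_Iic, IntegrableOn,
    Measure.restrict_restrict measurableSet_Iic, inter_comm, Ioi_inter_Iic]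

theorem continuous_uncurry_clm_of_norm_le {α E F : Type*} [TopologicalSpace α]
    [NormedAddCommGroup E] [NormedSpace ℝ E] [NormedAddCommGroup F] [NormedSpace ℝ F]
    {S : α → E →L[ℝ] F} {C : ℝ} (hS : ∀ a, ‖S a‖ ≤ C)
    (hSc : ∀ x, Continuous fun a => S a x) : Continuous fun p : α × E => S p.1 p.2 :=
  continuous_prod_of_continuous_lipschitzWith' _ C.toNNReal
    (fun a => ContinuousLinearMap.lipschitzWith_of_opNorm_le ((hS a).trans (le_coe_toNNReal C)))
    hSc

section Convolution

variable {E F : Type*} [NormedAddCommGroup E] [NormedSpace ℝ E] [NormedAddCommGroup F]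
  [NormedSpace ℝ F] {S : ℝ → E →L[ℝ] F} {C : ℝ}

theorem aestronglyMeasurable_apply_sub (hS : ∀ τ, ‖S τ‖ ≤ C)
    (hSc : ∀ x, Continuous fun τ => S τ x) {μ : Measure ℝ} {g : ℝ → E}
    (hg : AEStronglyMeasurable g μ) (t : ℝ) :
    AEStronglyMeasurable (fun s => S (t - s) (g s)) μ :=
  (continuous_uncurry_clm_of_norm_le hS hSc).comp_aestronglyMeasurable
    ((continuous_const.sub continuous_id).aestronglyMeasurable.prodMk hg)

theorem integrableOn_apply_sub (hS : ∀ τ, ‖S τ‖ ≤ C) (hSc : ∀ x, Continuous fun τ => S τ x)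
    {g : ℝ → E} {A : Set ℝ} (hg : IntegrableOn g A) (t : ℝ) :
    IntegrableOn (fun s => S (t - s) (g s)) A :=
  (hg.norm.const_mul C).mono' (aestronglyMeasurable_apply_sub hS hSc hg.1 t)
    (Eventually.of_forall fun s => ((S (t - s)).le_opNorm _).trans (by gcongr; exact hS _))

theorem continuous_setIntegral_Ioc_apply_sub (hS : ∀ τ, ‖S τ‖ ≤ C)
    (hSc : ∀ x, Continuous fun τ => S τ x) {g : ℝ → E} (hg : ∀ b, IntegrableOn g (Ioc 0 b)) :
    Continuous fun t => ∫ s in Ioc 0 t, S (t - s) (g s) := by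
  have hrepr : (fun t => ∫ s in Ioc 0 t, S (t - s) (g s)) =
      fun t => ∫ s in Ioi 0, (Iic t).indicator (fun s => S (t - s) (g s)) s := by
    ext t
    rw [setIntegral_indicator measurableSet_Iic, Ioi_inter_Iic]
  rw [hrepr, continuous_iff_continuousAt]
  intro t₀
  refine continuousAt_of_dominated
    (bound := (Iic (t₀ + 1)).indicator fun s => C * ‖g s‖) ?_ ?_ ?_ ?_
  · exact Eventually.of_forall fun t =>
      (integrableOn_apply_sub hS hSc (hg t) t).integrable_indicator_Iic.1
  · filter_upwards [Iio_mem_nhds (lt_add_one t₀)] with t ht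
    refine Eventually.of_forall fun s => ?_
    rw [norm_indicator_eq_indicator_norm]
    refine (indicator_le_indicator_of_subset (Iic_subset_Iic.2 (le_of_lt ht))
      (fun _ => norm_nonneg _) s).trans (indicator_le_indicator ?_)
    exact ((S (t - s)).le_opNorm _).trans (by gcongr; exact hS _)
  · exact IntegrableOn.integrable_indicator_Iic ((hg _).norm.const_mul C)
  · have hne : ∀ᵐ s ∂(volume.restrict (Ioi (0 : ℝ))), s ≠ t₀ :=
      ae_restrict_of_ae (compl_mem_ae_iff.2 (measure_singleton t₀))
    -- near `t₀`, the integrand at `s ≠ t₀` is either `S (t - s) (g s)` or `0`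
    filter_upwards [hne] with s hs
    rcases hs.lt_or_gt with hlt | hgt
    · refine ((hSc (g s)).comp (continuous_sub_right s)).continuousAt.congr ?_
      filter_upwards [Ioi_mem_nhds hlt] with t ht
      exact (indicator_of_mem (mem_Iic.2 (le_of_lt (mem_Ioi.1 ht))) fun s => S (t - s) (g s)).symm
    · refine (continuousAt_const (y := (0 : F))).congr ?_
      filter_upwards [Iio_mem_nhds hgt] with t ht
      exact (indicator_of_notMem (notMem_Iic.2 ht) fun s => S (t - s) (g s)).symm

end Convolution

theorem setIntegral_Ioc_exp_neg_mul_sub_le {a : ℝ} (ha : 0 < a) (t : ℝ) :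
    ∫ s in Ioc 0 t, exp (-a * (t - s)) ≤ a⁻¹ := by
  have hsplit : (fun s => exp (-a * (t - s))) = fun s => exp (a * s) * exp (-a * t) := by
    ext s
    rw [← exp_add]
    ring_nf
  have hint : IntegrableOn (fun s => exp (-a * (t - s))) (Iic t) := by
    rw [hsplit]
    exact (integrableOn_exp_mul_Iic ha t).mul_const _
  calc ∫ s in Ioc 0 t, exp (-a * (t - s))
      ≤ ∫ s in Iic t, exp (-a * (t - s)) :=
        setIntegral_mono_set hint (Eventually.of_forall fun _ => (exp_pos _).le)
          (Eventually.of_forall Ioc_subset_Iic_self)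
    _ = a⁻¹ := by
        rw [hsplit, integral_mul_const, integral_exp_mul_Iic ha, div_mul_eq_mul_div, ← exp_add]
        simp

theorem setIntegral_Ioc_exp_mul_norm_le {E : Type*} [NormedAddCommGroup E] {f : ℝ → E}
    (hf : MemLp f 2 (volume.restrict (Ioi 0))) {ν : ℝ} (hν : 0 < ν) (t : ℝ) :
    ∫ s in Ioc 0 t, exp (-ν * (t - s)) * ‖f s‖ ≤
      (eLpNorm f 2 (volume.restrict (Ioi 0))).toReal / √(2 * ν) := by
  have hsub : volume.restrict (Ioc 0 t) ≤ volume.restrict (Ioi (0 : ℝ)) :=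
    Measure.restrict_mono Ioc_subset_Ioi_self le_rfl
  have hexp :
      MemLp (fun s => exp (-ν * (t - s))) (ENNReal.ofReal 2) (volume.restrict (Ioc 0 t)) := by
    refine MemLp.of_bound (by fun_prop) 1 ((ae_restrict_iff' measurableSet_Ioc).2
      (Eventually.of_forall fun s hs => ?_))
    rw [norm_of_nonneg (exp_pos _).le]
    exact exp_neg_mul_le_one hν.le (sub_nonneg.2 hs.2)
  have hholder := integral_mul_le_Lp_mul_Lq_of_nonneg Real.HolderConjugate.two_two
    (Eventually.of_forall fun s => (exp_pos (-ν * (t - s))).le)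
    (Eventually.of_forall fun s => norm_nonneg (f s)) hexp
    (by simpa using (hf.mono_measure hsub).norm)
  have hexp_factor :
      (∫ s in Ioc 0 t, exp (-ν * (t - s)) ^ (2 : ℝ)) ^ (1 / 2 : ℝ) ≤ (√(2 * ν))⁻¹ := by
    have hsq (s : ℝ) : exp (-ν * (t - s)) ^ (2 : ℝ) = exp (-(2 * ν) * (t - s)) := by
      rw [← exp_mul]
      ring_nf
    simp only [hsq]
    calc _ ≤ (2 * ν)⁻¹ ^ (1 / 2 : ℝ) :=
          rpow_le_rpow (setIntegral_nonneg measurableSet_Ioc fun _ _ => (exp_pos _).le)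
            (setIntegral_Ioc_exp_neg_mul_sub_le (by positivity) t) (by norm_num)
      _ = (√(2 * ν))⁻¹ := by rw [sqrt_eq_rpow, inv_rpow (by positivity)]
  have hf_factor : (∫ s in Ioc 0 t, ‖f s‖ ^ (2 : ℝ)) ^ (1 / 2 : ℝ) ≤
      (eLpNorm f 2 (volume.restrict (Ioi 0))).toReal := by
    rw [hf.eLpNorm_eq_integral_rpow_norm two_ne_zero ENNReal.ofNat_ne_top,
      ENNReal.toReal_ofReal (by positivity)]
    simp only [ENNReal.toReal_ofNat, one_div]
    refine rpow_le_rpow (setIntegral_nonneg measurableSet_Ioc fun _ _ => by positivity) ?_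
      (by norm_num)
    exact setIntegral_mono_set
      (by simpa only [ENNReal.toReal_ofNat, IntegrableOn] using
        hf.integrable_norm_rpow two_ne_zero ENNReal.ofNat_ne_top)
      (Eventually.of_forall fun _ => by positivity) (Eventually.of_forall Ioc_subset_Ioi_self)
  calc _ ≤ _ := hholder
    _ ≤ (√(2 * ν))⁻¹ * (eLpNorm f 2 (volume.restrict (Ioi 0))).toReal :=
        mul_le_mul hexp_factor hf_factor (by positivity) (by positivity)
    _ = _ := by rw [div_eq_inv_mul]

/- `T` is only controlled on `[0, ∞)`; `τ ↦ T (max τ 0)` is a bounded, strongly continuous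
extension to `ℝ` that agrees with `T (t - s)` on the range of integration. -/
theorem eqOn_apply_max_sub {E F : Type*} [NormedAddCommGroup E] [NormedSpace ℝ E]
    [NormedAddCommGroup F] [NormedSpace ℝ F] (T : ℝ → E →L[ℝ] F) (g : ℝ → E) (t : ℝ) :
    EqOn (fun s => T (max (t - s) 0) (g s)) (fun s => T (t - s) (g s)) (Ioc 0 t) :=
  fun s hs => by simp only [max_eq_left (sub_nonneg.2 hs.2)]

section Semigroup

variable {X : Type*} [NormedAddCommGroup X] [InnerProductSpace ℝ X]
  {T : ℝ → X →L[ℝ] X} {M ν : ℝ}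

namespace IsC0SemigroupWith

theorem bound_nonneg (hT : IsC0SemigroupWith T M ν) : 0 ≤ M := zero_le_one.trans hT.1

theorem rate_pos (hT : IsC0SemigroupWith T M ν) : 0 < ν := hT.2.1

theorem continuousOn_apply (hT : IsC0SemigroupWith T M ν) (x : X) :
    ContinuousOn (fun t => T t x) (Ici 0) :=
  hT.2.2.2.2.1 x

theorem norm_le_mul_exp (hT : IsC0SemigroupWith T M ν) {t : ℝ} (ht : 0 ≤ t) :
    ‖T t‖ ≤ M * exp (-ν * t) :=
  hT.2.2.2.2.2 t ht

theorem norm_le (hT : IsC0SemigroupWith T M ν) {t : ℝ} (ht : 0 ≤ t) : ‖T t‖ ≤ M :=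
  (hT.norm_le_mul_exp ht).trans
    (mul_le_of_le_one_right hT.bound_nonneg (exp_neg_mul_le_one hT.rate_pos.le ht))

theorem continuous_max_apply (hT : IsC0SemigroupWith T M ν) (x : X) :
    Continuous fun τ => T (max τ 0) x :=
  (hT.continuousOn_apply x).comp_continuous (continuous_id.max continuous_const)
    fun τ => le_max_right τ 0

theorem integrableOn_apply_sub (hT : IsC0SemigroupWith T M ν) {g : ℝ → X} {t : ℝ}
    (hg : IntegrableOn g (Ioc 0 t)) : IntegrableOn (fun s => T (t - s) (g s)) (Ioc 0 t) :=
  (_root_.integrableOn_apply_sub (fun τ => hT.norm_le (le_max_right τ 0))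
    hT.continuous_max_apply hg t).congr_fun (eqOn_apply_max_sub T g t) measurableSet_Ioc

theorem continuous_setIntegral_Ioc (hT : IsC0SemigroupWith T M ν) {g : ℝ → X}
    (hg : ∀ b, IntegrableOn g (Ioc 0 b)) : Continuous fun t => ∫ s in Ioc 0 t, T (t - s) (g s) :=
  (continuous_setIntegral_Ioc_apply_sub (fun τ => hT.norm_le (le_max_right τ 0))
    hT.continuous_max_apply hg).congr fun t =>
      setIntegral_congr_fun measurableSet_Ioc (eqOn_apply_max_sub T g t)

theorem norm_setIntegral_le (hT : IsC0SemigroupWith T M ν) {E : Type*} [NormedAddCommGroup E]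
    {f : ℝ → E} (hf : MemLp f 2 (volume.restrict (Ioi 0))) {g : ℝ → X} {K t : ℝ} (hK : 0 ≤ K)
    (hg : ∀ s ∈ Ioc 0 t, ‖g s‖ ≤ K * ‖f s‖) :
    ‖∫ s in Ioc 0 t, T (t - s) (g s)‖ ≤
      M * K * ((eLpNorm f 2 (volume.restrict (Ioi 0))).toReal / √(2 * ν)) := by
  have hM := hT.bound_nonneg
  have hexp_le (s : ℝ) (hs : s ∈ Ioc 0 t) : exp (-ν * (t - s)) ≤ 1 :=
    exp_neg_mul_le_one hT.rate_pos.le (sub_nonneg.2 hs.2)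
  have hint : Integrable (fun s => exp (-ν * (t - s)) * ‖f s‖) (volume.restrict (Ioc 0 t)) :=
    (hf.integrableOn_Ioc t).norm.bdd_mul (c := 1) (by fun_prop)
      ((ae_restrict_iff' measurableSet_Ioc).2 (Eventually.of_forall fun s hs => by
        rw [norm_of_nonneg (exp_pos _).le]; exact hexp_le s hs))
  calc ‖∫ s in Ioc 0 t, T (t - s) (g s)‖
      ≤ ∫ s in Ioc 0 t, M * K * (exp (-ν * (t - s)) * ‖f s‖) := by
        refine norm_integral_le_of_norm_le (hint.const_mul _)
          ((ae_restrict_iff' measurableSet_Ioc).2 (Eventually.of_forall fun s hs => ?_))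
        calc ‖T (t - s) (g s)‖ ≤ ‖T (t - s)‖ * ‖g s‖ := (T (t - s)).le_opNorm _
          _ ≤ M * exp (-ν * (t - s)) * (K * ‖f s‖) :=
            mul_le_mul (hT.norm_le_mul_exp (sub_nonneg.2 hs.2)) (hg s hs) (norm_nonneg _)
              (mul_nonneg hM (exp_pos _).le)
          _ = M * K * (exp (-ν * (t - s)) * ‖f s‖) := by ring
    _ = M * K * ∫ s in Ioc 0 t, exp (-ν * (t - s)) * ‖f s‖ := integral_const_mul _ _
    _ ≤ _ := mul_le_mul_of_nonneg_left (setIntegral_Ioc_exp_mul_norm_le hf hT.rate_pos t)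
        (mul_nonneg hM hK)

end IsC0SemigroupWith

end Semigroup

/- `c₀` bounds `ζ₀`, and the successor step is the estimate `norm_setIntegral_le` for `ζ_{m+1}`,
fed with the bound `(Ξ b_m + δ_{m0} Ψ) ‖u(s)‖` on its source. -/
def volterraMajorant (M Ξ Ψ q c₀ : ℝ) : ℕ → ℝ
  | 0 => c₀
  | m + 1 => M * q * (Ξ * volterraMajorant M Ξ Ψ q c₀ m + if m = 0 then Ψ else 0)

theorem summable_volterraMajorant {M Ξ Ψ q : ℝ} (c₀ : ℝ) (hM : 0 ≤ M) (hΞ : 0 ≤ Ξ) (hq : 0 ≤ q)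
    (hr : M * Ξ * q < 1) : Summable (volterraMajorant M Ξ Ψ q c₀) := by
  refine summable_of_ratio_norm_eventually_le hr (eventually_atTop.2 ⟨1, fun m hm => ?_⟩)
  obtain ⟨k, rfl⟩ := Nat.exists_eq_add_of_le' hm
  have hstep : volterraMajorant M Ξ Ψ q c₀ (k + 1 + 1) =
      M * Ξ * q * volterraMajorant M Ξ Ψ q c₀ (k + 1) := by
    rw [volterraMajorant, if_neg k.succ_ne_zero]
    ring
  rw [hstep, norm_mul, norm_of_nonneg (by positivity)]

section Volterra

variable {X : Type*} [NormedAddCommGroup X] [InnerProductSpace ℝ X] {n : ℕ}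
  {T : ℝ → X →L[ℝ] X} {N : Fin n → X →L[ℝ] X} {ψ : Fin n → X} {u : ℝ → Fin n → ℝ} {φ₀ : X}
  {M ν : ℝ}

def volterraSource (T : ℝ → X →L[ℝ] X) (N : Fin n → X →L[ℝ] X) (ψ : Fin n → X)
    (u : ℝ → Fin n → ℝ) (φ₀ : X) (m : ℕ) (s : ℝ) : X :=
  (∑ i, u s i • N i (volterraTerm T N ψ u φ₀ m s)) + if m = 0 then ∑ i, u s i • ψ i else 0

theorem volterraTerm_succ (m : ℕ) (t : ℝ) :
    volterraTerm T N ψ u φ₀ (m + 1) t =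
      ∫ s in Ioc 0 t, T (t - s) (volterraSource T N ψ u φ₀ m s) := by
  cases m <;> simp [volterraTerm, volterraSource]

theorem norm_volterraSource_le (m : ℕ) (s : ℝ) :
    ‖volterraSource T N ψ u φ₀ m s‖ ≤
      ((∑ i, ‖N i‖) * ‖volterraTerm T N ψ u φ₀ m s‖ + if m = 0 then ∑ i, ‖ψ i‖ else 0) *
        ‖u s‖ := by
  have hN : ‖∑ i, u s i • N i (volterraTerm T N ψ u φ₀ m s)‖ ≤
      (∑ i, ‖N i‖) * ‖volterraTerm T N ψ u φ₀ m s‖ * ‖u s‖ := by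
    calc _ ≤ ‖u s‖ * ∑ i, ‖N i (volterraTerm T N ψ u φ₀ m s)‖ := norm_sum_smul_le _ _
      _ ≤ ‖u s‖ * ∑ i, ‖N i‖ * ‖volterraTerm T N ψ u φ₀ m s‖ := by
        gcongr with i
        exact (N i).le_opNorm _
      _ = _ := by rw [← Finset.sum_mul, mul_comm]
  have hψ : ‖if m = 0 then ∑ i, u s i • ψ i else 0‖ ≤
      (if m = 0 then ∑ i, ‖ψ i‖ else 0) * ‖u s‖ := by
    split_ifs
    · rw [mul_comm]
      exact norm_sum_smul_le _ _
    · simp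
  calc _ ≤ _ := norm_add_le _ _
    _ ≤ _ := add_le_add hN hψ
    _ = _ := by ring

theorem tsum_volterraSource [CompleteSpace X] {s : ℝ}
    (hζ : Summable fun m => volterraTerm T N ψ u φ₀ m s) :
    ∑' m, volterraSource T N ψ u φ₀ m s =
      (∑ i, u s i • N i (∑' m, volterraTerm T N ψ u φ₀ m s)) + ∑ i, u s i • ψ i := by
  have hL (x : X) : (∑ i, u s i • N i) x = ∑ i, u s i • N i x := by simp
  simp only [volterraSource, ← hL]
  rw [(hζ.mapL _).tsum_add (hasSum_ite_eq 0 _).summable, ← ContinuousLinearMap.map_tsum _ hζ,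
    tsum_ite_eq]

theorem integrableOn_volterraSource (hu : MemLp u 2 (volume.restrict (Ioi 0))) {m : ℕ}
    (hζ : AEStronglyMeasurable (volterraTerm T N ψ u φ₀ m) (volume.restrict (Ioi 0))) {B : ℝ}
    (hB : ∀ s, 0 ≤ s → ‖volterraTerm T N ψ u φ₀ m s‖ ≤ B) (b : ℝ) :
    IntegrableOn (volterraSource T N ψ u φ₀ m) (Ioc 0 b) := by
  have hmeas : AEStronglyMeasurable (volterraSource T N ψ u φ₀ m) (volume.restrict (Ioi 0)) := by
    have := hu.1
    unfold volterraSource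
    split_ifs <;> fun_prop
  refine ((hu.integrableOn_Ioc b).norm.const_mul ((∑ i, ‖N i‖) * B + ∑ i, ‖ψ i‖)).mono'
    (hmeas.mono_measure (Measure.restrict_mono Ioc_subset_Ioi_self le_rfl))
    ((ae_restrict_iff' measurableSet_Ioc).2 (Eventually.of_forall fun s hs => ?_))
  refine (norm_volterraSource_le m s).trans ?_
  gcongr
  · exact hB s hs.1.le
  · split_ifs
    exacts [le_rfl, by positivity]

theorem aestronglyMeasurable_volterraTerm (hT : IsC0SemigroupWith T M ν)
    (hu : MemLp u 2 (volume.restrict (Ioi 0))) {b : ℕ → ℝ}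
    (hb : ∀ m s, 0 ≤ s → ‖volterraTerm T N ψ u φ₀ m s‖ ≤ b m) (m : ℕ) :
    AEStronglyMeasurable (volterraTerm T N ψ u φ₀ m) (volume.restrict (Ioi 0)) := by
  induction m with
  | zero =>
    exact ((hT.continuousOn_apply φ₀).mono Ioi_subset_Ici_self).aestronglyMeasurable
      measurableSet_Ioi
  | succ m ih =>
    have hcont := hT.continuous_setIntegral_Ioc (integrableOn_volterraSource hu ih (hb m))
    rw [← funext (volterraTerm_succ m)] at hcont
    exact hcont.aestronglyMeasurable

theorem norm_volterraTerm_le (hT : IsC0SemigroupWith T M ν)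
    (hu : MemLp u 2 (volume.restrict (Ioi 0))) (m : ℕ) {t : ℝ} (ht : 0 ≤ t) :
    ‖volterraTerm T N ψ u φ₀ m t‖ ≤ volterraMajorant M (∑ i, ‖N i‖) (∑ i, ‖ψ i‖)
      ((eLpNorm u 2 (volume.restrict (Ioi 0))).toReal / √(2 * ν)) (M * ‖φ₀‖) m := by
  induction m generalizing t with
  | zero =>
    exact ((T t).le_opNorm φ₀).trans (mul_le_mul_of_nonneg_right (hT.norm_le ht) (norm_nonneg _))
  | succ m ih =>
    have hK : 0 ≤ (∑ i, ‖N i‖) * volterraMajorant M (∑ i, ‖N i‖) (∑ i, ‖ψ i‖)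
        ((eLpNorm u 2 (volume.restrict (Ioi 0))).toReal / √(2 * ν)) (M * ‖φ₀‖) m +
        if m = 0 then ∑ i, ‖ψ i‖ else 0 := by
      have := (norm_nonneg _).trans (ih le_rfl)
      positivity
    rw [volterraTerm_succ, volterraMajorant]
    refine (hT.norm_setIntegral_le hu hK fun s hs => (norm_volterraSource_le m s).trans ?_).trans
      (le_of_eq (by ring))
    gcongr
    exact ih hs.1.le

theorem tsum_volterraTerm_eq_mild [CompleteSpace X] (hT : IsC0SemigroupWith T M ν)
    (hu : MemLp u 2 (volume.restrict (Ioi 0))) {b : ℕ → ℝ} (hbs : Summable b)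
    (hb : ∀ m s, 0 ≤ s → ‖volterraTerm T N ψ u φ₀ m s‖ ≤ b m) {t : ℝ} (ht : 0 ≤ t) :
    ∑' m, volterraTerm T N ψ u φ₀ m t =
      T t φ₀ + ∫ s in Ioc 0 t,
        T (t - s) ((∑ i, u s i • N i (∑' m, volterraTerm T N ψ u φ₀ m s)) + ∑ i, u s i • ψ i) := by
  set K : ℕ → ℝ := fun m => (∑ i, ‖N i‖) * b m + if m = 0 then ∑ i, ‖ψ i‖ else 0
  have hK : Summable K := (hbs.mul_left _).add (hasSum_ite_eq 0 _).summable
  have hsource (m : ℕ) {s : ℝ} (hs : 0 ≤ s) : ‖volterraSource T N ψ u φ₀ m s‖ ≤ K m * ‖u s‖ :=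
    (norm_volterraSource_le m s).trans (by simp only [K]; gcongr; exact hb m s hs)
  have hζ {s : ℝ} (hs : 0 ≤ s) : Summable fun m => volterraTerm T N ψ u φ₀ m s :=
    hbs.of_norm_bounded fun m => hb m s hs
  have hint (m : ℕ) : IntegrableOn (fun s => T (t - s) (volterraSource T N ψ u φ₀ m s)) (Ioc 0 t) :=
    hT.integrableOn_apply_sub (integrableOn_volterraSource hu
      (aestronglyMeasurable_volterraTerm hT hu hb m) (hb m) t)
  have hint_norm :
      Summable fun m => ∫ s in Ioc 0 t, ‖T (t - s) (volterraSource T N ψ u φ₀ m s)‖ := by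
    refine ((hK.mul_left M).mul_right (∫ s in Ioc 0 t, ‖u s‖)).of_nonneg_of_le
      (fun m => integral_nonneg fun _ => norm_nonneg _) fun m => ?_
    rw [← integral_const_mul]
    refine setIntegral_mono_on (hint m).norm ((hu.integrableOn_Ioc t).norm.const_mul _)
      measurableSet_Ioc fun s hs => ?_
    calc _ ≤ ‖T (t - s)‖ * ‖volterraSource T N ψ u φ₀ m s‖ := (T (t - s)).le_opNorm _
      _ ≤ M * (K m * ‖u s‖) := mul_le_mul (hT.norm_le (sub_nonneg.2 hs.2)) (hsource m hs.1.le)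
          (norm_nonneg _) hT.bound_nonneg
      _ = M * K m * ‖u s‖ := (mul_assoc _ _ _).symm
  have hpointwise : EqOn (fun s => ∑' m, T (t - s) (volterraSource T N ψ u φ₀ m s))
      (fun s => T (t - s) ((∑ i, u s i • N i (∑' m, volterraTerm T N ψ u φ₀ m s)) +
        ∑ i, u s i • ψ i)) (Ioc 0 t) := fun s hs => by
    dsimp only
    rw [← ContinuousLinearMap.map_tsum _
      (hK.mul_right ‖u s‖ |>.of_norm_bounded fun m => hsource m hs.1.le),
      tsum_volterraSource (hζ hs.1.le)]
  rw [(hζ ht).tsum_eq_zero_add]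
  simp only [volterraTerm_succ]
  rw [integral_tsum_of_summable_integral_norm hint hint_norm,
    setIntegral_congr_fun measurableSet_Ioc hpointwise]
  rfl

end Volterra

theorem volterra_series_representation_general
    {X : Type*} [NormedAddCommGroup X] [InnerProductSpace ℝ X] [CompleteSpace X]
    {n : ℕ}
    (T : ℝ → X →L[ℝ] X) (N : Fin n → X →L[ℝ] X) (ψ : Fin n → X) (φ₀ : X)
    (M ν : ℝ) (hT : IsC0SemigroupWith T M ν)
    (u : ℝ → Fin n → ℝ)
    (hu2 : MemLp u 2 (volume.restrict (Set.Ioi (0 : ℝ))))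
    (husmall : eLpNorm u 2 (volume.restrict (Set.Ioi (0 : ℝ))) <
      ENNReal.ofReal (Real.sqrt (2 * ν) / (M * ∑ i, ‖N i‖))) :
    TendstoUniformlyOn
        (fun K t => ∑ m ∈ Finset.range K, volterraTerm T N ψ u φ₀ m t)
        (fun t => ∑' m : ℕ, volterraTerm T N ψ u φ₀ m t) atTop (Set.Ioi 0) ∧
    ∀ t : ℝ, 0 ≤ t →
      (∑' m : ℕ, volterraTerm T N ψ u φ₀ m t) =
        T t φ₀ + ∫ s in Set.Ioc (0 : ℝ) t,
          T (t - s) ((∑ i, u s i • N i (∑' m : ℕ, volterraTerm T N ψ u φ₀ m s)) +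
            ∑ i, u s i • ψ i) := by
  have hM := hT.bound_nonneg
  have hν := hT.rate_pos
  have hq : 0 ≤ (eLpNorm u 2 (volume.restrict (Ioi 0))).toReal / √(2 * ν) := by positivity
  have hr : M * (∑ i, ‖N i‖) * ((eLpNorm u 2 (volume.restrict (Ioi 0))).toReal / √(2 * ν)) < 1 :=
    mul_toReal_div_lt_one (by positivity) (by positivity) husmall
  have hsum := summable_volterraMajorant (Ψ := ∑ i, ‖ψ i‖) (M * ‖φ₀‖) hM (by positivity) hq hr
  have hbound (m : ℕ) (s : ℝ) (hs : 0 ≤ s) :=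
    norm_volterraTerm_le (N := N) (ψ := ψ) (φ₀ := φ₀) hT hu2 m hs
  exact ⟨tendstoUniformlyOn_tsum_nat hsum fun m s hs => hbound m s (le_of_lt hs),
    fun t ht => tsum_volterraTerm_eq_mild hT hu2 hsum hbound ht⟩

/-- If `‖u‖_{L²((0,∞),(ℝⁿ,‖·‖_∞))} < √(2ν)/(MΞ)` with `Ξ = ∑ᵢ ‖Nᵢ‖`, then
the Volterra series `ζ(t) = ∑_m ζ_m(t)` converges uniformly on `(0,∞)` and equals the mild
solution of the bilinear evolution equation. -/
theorem volterra_series_representation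
    {X : Type*} [NormedAddCommGroup X] [InnerProductSpace ℝ X] [CompleteSpace X]
    [TopologicalSpace.SeparableSpace X] {n : ℕ}
    (T : ℝ → X →L[ℝ] X) (N : Fin n → X →L[ℝ] X) (ψ : Fin n → X) (φ₀ : X)
    (M ν : ℝ) (hT : IsC0SemigroupWith T M ν)
    (u : ℝ → Fin n → ℝ)
    (hu2 : MemLp u 2 (volume.restrict (Set.Ioi (0 : ℝ))))
    (husmall : eLpNorm u 2 (volume.restrict (Set.Ioi (0 : ℝ))) <
      ENNReal.ofReal (Real.sqrt (2 * ν) / (M * ∑ i, ‖N i‖))) :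
    TendstoUniformlyOn
        (fun K t => ∑ m ∈ Finset.range K, volterraTerm T N ψ u φ₀ m t)
        (fun t => ∑' m : ℕ, volterraTerm T N ψ u φ₀ m t) atTop (Set.Ioi 0) ∧
    ∀ t : ℝ, 0 ≤ t →
      (∑' m : ℕ, volterraTerm T N ψ u φ₀ m t) =
        T t φ₀ + ∫ s in Set.Ioc (0 : ℝ) t,
          T (t - s) ((∑ i, u s i • N i (∑' m : ℕ, volterraTerm T N ψ u φ₀ m s)) +
            ∑ i, u s i • ψ i) :=
  volterra_series_representation_general T N ψ φ₀ M ν hT u hu2 husmall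

end
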